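/- Let u be a smooth function on an open set Ω ⊂ ℝ² with D := ((u_x−y)² + (u_y+x)²)^{1/2} > 0 on Ω, let θ be a smooth function on Ω with cos θ = (u_x−y)/D and sin θ = (u_y+x)/D, and set α := −1/D, N⊥f := (sin θ)f_x − (cos θ)f_y, Nf := (cos θ)f_x + (sin θ)f_y, and H := −N⊥θ. If u satisfies the vanishing-E₁ equation 2N⊥(α) = α² + (1/3)H² on Ω, then −α·N(H) − αH² + 2α²·N(θ) + (2/3)H·N⊥(N⊥(θ)) + N⊥(N⊥(α)) = −2α·N⊥(α) on Ω. -/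

import Mathlib

noncomputable def pdx (f : ℝ × ℝ → ℝ) (p : ℝ × ℝ) : ℝ := fderiv ℝ f p (1, 0)
noncomputable def pdy (f : ℝ × ℝ → ℝ) (p : ℝ × ℝ) : ℝ := fderiv ℝ f p (0, 1)

section helpers
variable {f g : ℝ × ℝ → ℝ} {p : ℝ × ℝ} {v : ℝ × ℝ}

lemma fd_mul (hf : DifferentiableAt ℝ f p) (hg : DifferentiableAt ℝ g p) (v : ℝ × ℝ) :
    fderiv ℝ (fun q => f q * g q) p v = f p * fderiv ℝ g p v + g p * fderiv ℝ f p v := by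
  rw [fderiv_fun_mul hf hg]; simp [mul_comm]

lemma fd_add (hf : DifferentiableAt ℝ f p) (hg : DifferentiableAt ℝ g p) (v : ℝ × ℝ) :
    fderiv ℝ (fun q => f q + g q) p v = fderiv ℝ f p v + fderiv ℝ g p v := by
  rw [fderiv_fun_add hf hg]; simp

lemma fd_sub (hf : DifferentiableAt ℝ f p) (hg : DifferentiableAt ℝ g p) (v : ℝ × ℝ) :
    fderiv ℝ (fun q => f q - g q) p v = fderiv ℝ f p v - fderiv ℝ g p v := by
  rw [fderiv_fun_sub hf hg]; simp

lemma fd_neg (v : ℝ × ℝ) :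
    fderiv ℝ (fun q => -(f q)) p v = -(fderiv ℝ f p v) := by
  rw [fderiv_fun_neg]; simp

lemma fd_const_mul (hf : DifferentiableAt ℝ f p) (c : ℝ) (v : ℝ × ℝ) :
    fderiv ℝ (fun q => c * f q) p v = c * fderiv ℝ f p v := by
  rw [fderiv_const_mul hf c]; simp

lemma fd_sin (hf : DifferentiableAt ℝ f p) (v : ℝ × ℝ) :
    fderiv ℝ (fun q => Real.sin (f q)) p v = Real.cos (f p) * fderiv ℝ f p v := by
  have h := (Real.hasDerivAt_sin (f p)).comp_hasFDerivAt p hf.hasFDerivAt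
  have h' : HasFDerivAt (fun q => Real.sin (f q)) (Real.cos (f p) • fderiv ℝ f p) p := h
  rw [h'.fderiv]; simp

lemma fd_cos (hf : DifferentiableAt ℝ f p) (v : ℝ × ℝ) :
    fderiv ℝ (fun q => Real.cos (f q)) p v = -Real.sin (f p) * fderiv ℝ f p v := by
  have h := (Real.hasDerivAt_cos (f p)).comp_hasFDerivAt p hf.hasFDerivAt
  have h' : HasFDerivAt (fun q => Real.cos (f q)) (-Real.sin (f p) • fderiv ℝ f p) p := h
  rw [h'.fderiv]; simp

lemma fd_inv (hf : DifferentiableAt ℝ f p) (hne : f p ≠ 0) (v : ℝ × ℝ) :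
    fderiv ℝ (fun q => (f q)⁻¹) p v = -((f p) ^ 2)⁻¹ * fderiv ℝ f p v := by
  have h := (hasDerivAt_inv hne).comp_hasFDerivAt p hf.hasFDerivAt
  have h' : HasFDerivAt (fun q => (f q)⁻¹) (-((f p) ^ 2)⁻¹ • fderiv ℝ f p) p := h
  rw [h'.fderiv]; simp

lemma fd_sq (hf : DifferentiableAt ℝ f p) (v : ℝ × ℝ) :
    fderiv ℝ (fun q => (f q) ^ 2) p v = 2 * f p * fderiv ℝ f p v := by
  have h : (fun q => (f q) ^ 2) = fun q => f q * f q := by funext q; ring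
  rw [h, fd_mul hf hf]; ring

lemma fd_fst (q : ℝ × ℝ) (v : ℝ × ℝ) :
    fderiv ℝ (fun r : ℝ × ℝ => r.1) q v = v.1 := by
  have : fderiv ℝ (Prod.fst : ℝ × ℝ → ℝ) q = ContinuousLinearMap.fst ℝ ℝ ℝ := fderiv_fst
  rw [show (fun r : ℝ × ℝ => r.1) = (Prod.fst : ℝ × ℝ → ℝ) from rfl, this]; rfl

lemma fd_snd (q : ℝ × ℝ) (v : ℝ × ℝ) :
    fderiv ℝ (fun r : ℝ × ℝ => r.2) q v = v.2 := by
  have : fderiv ℝ (Prod.snd : ℝ × ℝ → ℝ) q = ContinuousLinearMap.snd ℝ ℝ ℝ := fderiv_snd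
  rw [show (fun r : ℝ × ℝ => r.2) = (Prod.snd : ℝ × ℝ → ℝ) from rfl, this]; rfl

lemma contDiffAt_pdx (hf : ContDiffAt ℝ (⊤ : ℕ∞) f p) : ContDiffAt ℝ (⊤ : ℕ∞) (pdx f) p :=
  (hf.fderiv_right (by simp)).clm_apply contDiffAt_const

lemma contDiffAt_pdy (hf : ContDiffAt ℝ (⊤ : ℕ∞) f p) : ContDiffAt ℝ (⊤ : ℕ∞) (pdy f) p :=
  (hf.fderiv_right (by simp)).clm_apply contDiffAt_const

lemma fd_fderiv_apply (hf : ContDiffAt ℝ (⊤ : ℕ∞) f p) (v w : ℝ × ℝ) :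
    fderiv ℝ (fun q => fderiv ℝ f q w) p v = fderiv ℝ (fderiv ℝ f) p v w := by
  have hd : DifferentiableAt ℝ (fderiv ℝ f) p :=
    (hf.fderiv_right (m := (⊤ : ℕ∞)) (by simp)).differentiableAt (by simp)
  rw [fderiv_clm_apply hd (differentiableAt_const w)]
  simp

lemma pdx_pdy_comm (hf : ContDiffAt ℝ (⊤ : ℕ∞) f p) : pdx (pdy f) p = pdy (pdx f) p := by
  have hs := hf.isSymmSndFDerivAt (by rw [minSmoothness_of_isRCLikeNormedField]; exact WithTop.coe_le_coe.mpr le_top)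
  show fderiv ℝ (pdy f) p (1,0) = fderiv ℝ (pdx f) p (0,1)
  have h1 : fderiv ℝ (pdy f) p (1,0) = fderiv ℝ (fderiv ℝ f) p (1,0) (0,1) :=
    fd_fderiv_apply hf (1,0) (0,1)
  have h2 : fderiv ℝ (pdx f) p (0,1) = fderiv ℝ (fderiv ℝ f) p (0,1) (1,0) :=
    fd_fderiv_apply hf (0,1) (1,0)
  rw [h1, h2, hs]

end helpers

/-- for a smooth nonsingular graph satisfying the vanishing-E₁ equation
`2N⊥(α) = α² + (1/3)H²`, one has
`−α·N(H) − αH² + 2α²·N(θ) + (2/3)H·N⊥N⊥(θ) + N⊥N⊥(α) = −2α·N⊥(α)`. -/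
theorem stmt_16 (Ω : Set (ℝ × ℝ)) (hΩ : IsOpen Ω)
    (u θ : ℝ × ℝ → ℝ) (hu : ContDiffOn ℝ (⊤ : ℕ∞) u Ω) (hθ : ContDiffOn ℝ (⊤ : ℕ∞) θ Ω)
    (D α H : ℝ × ℝ → ℝ)
    (hD : ∀ p, D p = Real.sqrt ((fderiv ℝ u p (1, 0) - p.2) ^ 2
      + (fderiv ℝ u p (0, 1) + p.1) ^ 2))
    (hDpos : ∀ p ∈ Ω, 0 < D p)
    (hcos : ∀ p ∈ Ω, Real.cos (θ p) = (fderiv ℝ u p (1, 0) - p.2) / D p)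
    (hsin : ∀ p ∈ Ω, Real.sin (θ p) = (fderiv ℝ u p (0, 1) + p.1) / D p)
    (hα : ∀ p, α p = -1 / D p)
    (Nperp N : (ℝ × ℝ → ℝ) → ℝ × ℝ → ℝ)
    (hNperp : ∀ f p, Nperp f p =
      Real.sin (θ p) * fderiv ℝ f p (1, 0) - Real.cos (θ p) * fderiv ℝ f p (0, 1))
    (hN : ∀ f p, N f p =
      Real.cos (θ p) * fderiv ℝ f p (1, 0) + Real.sin (θ p) * fderiv ℝ f p (0, 1))
    (hH : ∀ p, H p = -(Nperp θ p))
    (hE1 : ∀ p ∈ Ω, 2 * Nperp α p = (α p) ^ 2 + (1 / 3) * (H p) ^ 2) :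
    ∀ p ∈ Ω, -(α p) * N H p - α p * (H p) ^ 2 + 2 * (α p) ^ 2 * N θ p
        + (2 / 3) * H p * Nperp (Nperp θ) p + Nperp (Nperp α) p
      = -2 * α p * Nperp α p := by
  -- smoothness facts
  have hCu : ∀ q ∈ Ω, ContDiffAt ℝ (⊤ : ℕ∞) u q := fun q hq => hu.contDiffAt (hΩ.mem_nhds hq)
  have hCθ : ∀ q ∈ Ω, ContDiffAt ℝ (⊤ : ℕ∞) θ q := fun q hq => hθ.contDiffAt (hΩ.mem_nhds hq)
  have hDne : ∀ q ∈ Ω, D q ≠ 0 := fun q hq => ne_of_gt (hDpos q hq)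
  have hCD : ∀ q ∈ Ω, ContDiffAt ℝ (⊤ : ℕ∞) D q := by
    intro q hq
    have ha : ContDiffAt ℝ (⊤ : ℕ∞) (fun r : ℝ × ℝ => fderiv ℝ u r (1,0) - r.2) q :=
      (contDiffAt_pdx (hCu q hq)).sub contDiffAt_snd
    have hb : ContDiffAt ℝ (⊤ : ℕ∞) (fun r : ℝ × ℝ => fderiv ℝ u r (0,1) + r.1) q :=
      (contDiffAt_pdy (hCu q hq)).add contDiffAt_fst
    have hg : ContDiffAt ℝ (⊤ : ℕ∞)
        (fun r : ℝ × ℝ => (fderiv ℝ u r (1,0) - r.2)^2 + (fderiv ℝ u r (0,1) + r.1)^2) q :=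
      (ha.pow 2).add (hb.pow 2)
    have hgpos : 0 < (fderiv ℝ u q (1,0) - q.2)^2 + (fderiv ℝ u q (0,1) + q.1)^2 := by
      have := hDpos q hq
      rw [hD q] at this
      exact Real.sqrt_pos.mp this
    have hDe : D = fun q => Real.sqrt ((fderiv ℝ u q (1,0) - q.2)^2
        + (fderiv ℝ u q (0,1) + q.1)^2) := funext hD
    rw [hDe]
    exact (Real.contDiffAt_sqrt (ne_of_gt hgpos)).comp q hg
  have hCα : ∀ q ∈ Ω, ContDiffAt ℝ (⊤ : ℕ∞) α q := by
    intro q hq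
    have : α = fun r => -1 / D r := funext hα
    rw [this]
    exact ContDiffAt.div contDiffAt_const (hCD q hq) (hDne q hq)
  -- differentiability shortcuts
  have hdθ : ∀ q ∈ Ω, DifferentiableAt ℝ θ q := fun q hq => (hCθ q hq).differentiableAt (by simp)
  have hdD : ∀ q ∈ Ω, DifferentiableAt ℝ D q := fun q hq => (hCD q hq).differentiableAt (by simp)
  have hdα : ∀ q ∈ Ω, DifferentiableAt ℝ α q := fun q hq => (hCα q hq).differentiableAt (by simp)
  have hdpxα : ∀ q ∈ Ω, DifferentiableAt ℝ (fun r => fderiv ℝ α r (1,0)) q :=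
    fun q hq => (contDiffAt_pdx (hCα q hq)).differentiableAt (by simp)
  have hdpyα : ∀ q ∈ Ω, DifferentiableAt ℝ (fun r => fderiv ℝ α r (0,1)) q :=
    fun q hq => (contDiffAt_pdy (hCα q hq)).differentiableAt (by simp)
  have hdpxθ : ∀ q ∈ Ω, DifferentiableAt ℝ (fun r => fderiv ℝ θ r (1,0)) q :=
    fun q hq => (contDiffAt_pdx (hCθ q hq)).differentiableAt (by simp)
  have hdpyθ : ∀ q ∈ Ω, DifferentiableAt ℝ (fun r => fderiv ℝ θ r (0,1)) q :=
    fun q hq => (contDiffAt_pdy (hCθ q hq)).differentiableAt (by simp)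
  -- function forms
  have hNperpFun : ∀ f, Nperp f = fun q =>
      Real.sin (θ q) * fderiv ℝ f q (1,0) - Real.cos (θ q) * fderiv ℝ f q (0,1) :=
    fun f => funext (hNperp f)
  have hNFun : ∀ f, N f = fun q =>
      Real.cos (θ q) * fderiv ℝ f q (1,0) + Real.sin (θ q) * fderiv ℝ f q (0,1) :=
    fun f => funext (hN f)
  have hHe : H = fun q => -(Nperp θ q) := funext hH
  -- differentiability of composite fields on Ω
  have hdNperpα : ∀ q ∈ Ω, DifferentiableAt ℝ (Nperp α) q := by
    intro q hq
    rw [hNperpFun α]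
    exact (((hdθ q hq).sin).mul (hdpxα q hq)).sub (((hdθ q hq).cos).mul (hdpyα q hq))
  have hdNθ : ∀ q ∈ Ω, DifferentiableAt ℝ (N θ) q := by
    intro q hq
    rw [hNFun θ]
    exact (((hdθ q hq).cos).mul (hdpxθ q hq)).add (((hdθ q hq).sin).mul (hdpyθ q hq))
  have hdNperpθ : ∀ q ∈ Ω, DifferentiableAt ℝ (Nperp θ) q := by
    intro q hq
    rw [hNperpFun θ]
    exact (((hdθ q hq).sin).mul (hdpxθ q hq)).sub (((hdθ q hq).cos).mul (hdpyθ q hq))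
  have hdH : ∀ q ∈ Ω, DifferentiableAt ℝ H q := by
    intro q hq; rw [hHe]; exact (hdNperpθ q hq).neg
  -- derivative of α in terms of derivative of D
  have hdαv : ∀ q ∈ Ω, ∀ v, fderiv ℝ α q v = ((D q)^2)⁻¹ * fderiv ℝ D q v := by
    intro q hq v
    have hαe : α = fun r => -((D r)⁻¹) := by
      funext r; rw [hα r]; ring
    rw [hαe, fd_neg, fd_inv (hdD q hq) (hDne q hq)]; ring
  ------------------------------------------------------------------
  -- L1 : the identity  N⊥α = α Nθ + 2α²  on Ω
  ------------------------------------------------------------------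
  have L1 : ∀ q ∈ Ω, Nperp α q = α q * N θ q + 2 * (α q)^2 := by
    intro q hq
    -- the two surface equations
    have hfc : ∀ r ∈ Ω, Real.cos (θ r) * D r = fderiv ℝ u r (1,0) - r.2 := by
      intro r hr; rw [hcos r hr]; field_simp [hDne r hr]
    have hfs : ∀ r ∈ Ω, Real.sin (θ r) * D r = fderiv ℝ u r (0,1) + r.1 := by
      intro r hr; rw [hsin r hr]; field_simp [hDne r hr]
    have hdpyu : DifferentiableAt ℝ (fun r : ℝ × ℝ => fderiv ℝ u r (0,1)) q :=
      (contDiffAt_pdy (hCu q hq)).differentiableAt (by simp)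
    have hdpxu : DifferentiableAt ℝ (fun r : ℝ × ℝ => fderiv ℝ u r (1,0)) q :=
      (contDiffAt_pdx (hCu q hq)).differentiableAt (by simp)
    -- differentiate hfs in x
    have hecs : (fun r => Real.sin (θ r) * D r) =ᶠ[nhds q]
        (fun r : ℝ × ℝ => fderiv ℝ u r (0,1) + r.1) := by
      filter_upwards [hΩ.mem_nhds hq] with r hr using hfs r hr
    have hEx : fderiv ℝ (fun r => Real.sin (θ r) * D r) q (1,0)
        = fderiv ℝ (fun r : ℝ × ℝ => fderiv ℝ u r (0,1) + r.1) q (1,0) := by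
      rw [hecs.fderiv_eq]
    rw [fd_mul ((hdθ q hq).sin) (hdD q hq),
        fd_add hdpyu differentiableAt_fst,
        fd_sin (hdθ q hq), fd_fst] at hEx
    norm_num at hEx
    -- differentiate hfc in y
    have hecc : (fun r => Real.cos (θ r) * D r) =ᶠ[nhds q]
        (fun r : ℝ × ℝ => fderiv ℝ u r (1,0) - r.2) := by
      filter_upwards [hΩ.mem_nhds hq] with r hr using hfc r hr
    have hEy : fderiv ℝ (fun r => Real.cos (θ r) * D r) q (0,1)
        = fderiv ℝ (fun r : ℝ × ℝ => fderiv ℝ u r (1,0) - r.2) q (0,1) := by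
      rw [hecc.fderiv_eq]
    rw [fd_mul ((hdθ q hq).cos) (hdD q hq),
        fd_sub hdpxu differentiableAt_snd,
        fd_cos (hdθ q hq), fd_snd] at hEy
    norm_num at hEy
    -- symmetry of second derivatives of u
    have hsymu : fderiv ℝ (fun r => fderiv ℝ u r (0,1)) q (1,0)
        = fderiv ℝ (fun r => fderiv ℝ u r (1,0)) q (0,1) := pdx_pdy_comm (hCu q hq)
    rw [hsymu] at hEx
    -- combine
    have hkey : Real.sin (θ q) * fderiv ℝ D q (1,0) - Real.cos (θ q) * fderiv ℝ D q (0,1)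
        + D q * (Real.cos (θ q) * fderiv ℝ θ q (1,0) + Real.sin (θ q) * fderiv ℝ θ q (0,1))
        = 2 := by linear_combination hEx - hEy
    rw [hNperp α q, hN θ q, hα q, hdαv q hq (1,0), hdαv q hq (0,1)]
    have hD2 : (D q)^2 ≠ 0 := pow_ne_zero 2 (hDne q hq)
    field_simp [hDne q hq]
    linear_combination hkey
  ------------------------------------------------------------------
  intro p hp
  have hdθp := hdθ p hp
  set cθ := Real.cos (θ p) with hcθ
  set sθ := Real.sin (θ p) with hsθ
  ------------------------------------------------------------------
  -- expansions of fderiv (N θ) and fderiv (N⊥ θ)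
  ------------------------------------------------------------------
  have dNθ : ∀ v, fderiv ℝ (N θ) p v =
      cθ * fderiv ℝ (fun r => fderiv ℝ θ r (1,0)) p v
        + fderiv ℝ θ p (1,0) * (-sθ * fderiv ℝ θ p v)
      + (sθ * fderiv ℝ (fun r => fderiv ℝ θ r (0,1)) p v
        + fderiv ℝ θ p (0,1) * (cθ * fderiv ℝ θ p v)) := by
    intro v
    rw [hNFun θ,
      fd_add ((hdθp.cos).fun_mul (hdpxθ p hp)) ((hdθp.sin).fun_mul (hdpyθ p hp)),
      fd_mul (hdθp.cos) (hdpxθ p hp), fd_mul (hdθp.sin) (hdpyθ p hp),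
      fd_cos hdθp, fd_sin hdθp]
  have dNpθ : ∀ v, fderiv ℝ (Nperp θ) p v =
      sθ * fderiv ℝ (fun r => fderiv ℝ θ r (1,0)) p v
        + fderiv ℝ θ p (1,0) * (cθ * fderiv ℝ θ p v)
      - (cθ * fderiv ℝ (fun r => fderiv ℝ θ r (0,1)) p v
        + fderiv ℝ θ p (0,1) * (-sθ * fderiv ℝ θ p v)) := by
    intro v
    rw [hNperpFun θ,
      fd_sub ((hdθp.sin).fun_mul (hdpxθ p hp)) ((hdθp.cos).fun_mul (hdpyθ p hp)),
      fd_mul (hdθp.sin) (hdpxθ p hp), fd_mul (hdθp.cos) (hdpyθ p hp),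
      fd_cos hdθp, fd_sin hdθp]
  have hsymθ : fderiv ℝ (fun r => fderiv ℝ θ r (0,1)) p (1,0)
      = fderiv ℝ (fun r => fderiv ℝ θ r (1,0)) p (0,1) := pdx_pdy_comm (hCθ p hp)
  ------------------------------------------------------------------
  -- L2 : commutator identity applied to θ
  ------------------------------------------------------------------
  have L2 : Nperp (N θ) p - N (Nperp θ) p = -(N θ p)^2 - (Nperp θ p)^2 := by
    rw [hNperp (N θ) p, hN (Nperp θ) p, hN θ p, hNperp θ p,
        dNθ (1,0), dNθ (0,1), dNpθ (1,0), dNpθ (0,1), hsymθ]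
    ring
  ------------------------------------------------------------------
  -- identities N H = -N(N⊥θ), N⊥H = -N⊥(N⊥θ)
  ------------------------------------------------------------------
  have hdHv : ∀ v, fderiv ℝ H p v = -(fderiv ℝ (Nperp θ) p v) := by
    intro v; rw [hHe, fd_neg]
  have hNH : N H p = -(N (Nperp θ) p) := by
    rw [hN H p, hN (Nperp θ) p, hdHv, hdHv]; ring
  have hNpH : Nperp H p = -(Nperp (Nperp θ) p) := by
    rw [hNperp H p, hNperp (Nperp θ) p, hdHv, hdHv]; ring
  ------------------------------------------------------------------
  -- L3 : N⊥ applied to the E1 equation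
  ------------------------------------------------------------------
  have L3 : 2 * Nperp (Nperp α) p
      = 2 * α p * Nperp α p + (2/3) * H p * Nperp H p := by
    have hee : (fun q => 2 * Nperp α q) =ᶠ[nhds p]
        (fun q => (α q)^2 + (1/3) * (H q)^2) := by
      filter_upwards [hΩ.mem_nhds hp] with r hr using hE1 r hr
    have hfd := hee.fderiv_eq (𝕜 := ℝ)
    have h1 : fderiv ℝ (fun q => 2 * Nperp α q) p (1,0)
        = fderiv ℝ (fun q => (α q)^2 + (1/3) * (H q)^2) p (1,0) := by rw [hfd]
    have h2 : fderiv ℝ (fun q => 2 * Nperp α q) p (0,1)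
        = fderiv ℝ (fun q => (α q)^2 + (1/3) * (H q)^2) p (0,1) := by rw [hfd]
    rw [fd_const_mul (hdNperpα p hp),
        fd_add ((hdα p hp).fun_pow 2) (((hdH p hp).fun_pow 2).const_mul (1/3)),
        fd_sq (hdα p hp), fd_const_mul ((hdH p hp).fun_pow 2), fd_sq (hdH p hp)] at h1 h2
    rw [hNperp (Nperp α) p, hNperp α p, hNperp H p]
    linear_combination sθ * h1 - cθ * h2
  ------------------------------------------------------------------
  -- L4 : N⊥ applied to the identity L1
  ------------------------------------------------------------------
  have L4 : Nperp (Nperp α) p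
      = Nperp α p * N θ p + α p * Nperp (N θ) p + 4 * α p * Nperp α p := by
    have hee : Nperp α =ᶠ[nhds p]
        (fun q => α q * N θ q + 2 * (α q)^2) := by
      filter_upwards [hΩ.mem_nhds hp] with r hr using L1 r hr
    have hfd := hee.fderiv_eq (𝕜 := ℝ)
    have h1 : fderiv ℝ (Nperp α) p (1,0)
        = fderiv ℝ (fun q => α q * N θ q + 2 * (α q)^2) p (1,0) := by rw [hfd]
    have h2 : fderiv ℝ (Nperp α) p (0,1)
        = fderiv ℝ (fun q => α q * N θ q + 2 * (α q)^2) p (0,1) := by rw [hfd]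
    rw [fd_add ((hdα p hp).fun_mul (hdNθ p hp)) (((hdα p hp).fun_pow 2).const_mul 2),
        fd_mul (hdα p hp) (hdNθ p hp), fd_const_mul ((hdα p hp).fun_pow 2),
        fd_sq (hdα p hp)] at h1 h2
    rw [hNperp (Nperp α) p, hNperp α p, hNperp (N θ) p]
    linear_combination sθ * h1 - cθ * h2
  ------------------------------------------------------------------
  -- final algebra
  ------------------------------------------------------------------
  have hL1p := L1 p hp
  rw [hNpH] at L3
  rw [hH p] at L3
  rw [hNH, hH p]
  linear_combination (-(α p)) * L2 + L3 - L4 + (-(N θ p)) * hL1p
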